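/- arXiv:1508.00870 — 8 statements merged into one kernel-verified Lean document; each statement's English description precedes it below -/
import Mathlib

section
/- Let L be a finite collection of subsets of [r] closed under unions and intersections containing ∅ and [r]. For each i ∈ [r], let T_i be the union of all members of L not containing i. Then each T_i lies in L, is meet-irreducible in L, and every meet-irreducible element of L equals T_i for some i. -/
/-!
Every member of `L` not containing `i` lies in `T i`, so `T i` is the largest such member. If
`T i = B ∩ C`, then `i` is missing from `B` or from `C`, and maximality forces `T i` to equal that
one. Conversely each `a ∈ L` is the intersection of the `T i` with `i ∉ a`; a meet-irreducible `a`
cannot be a proper intersection of finitely many members of `L`, so it is one of these `T i`.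
-/

open Set

section MeetIrreducible

variable {α ι : Type*} [CompleteLattice α] {L : Set α} {a : α}

theorem InfClosed.exists_eq_of_eq_biInf (hL : InfClosed L) (htop : ⊤ ∈ L) (ha : a ≠ ⊤)
    (hirr : ∀ b ∈ L, ∀ c ∈ L, a = b ⊓ c → a = b ∨ a = c) {f : ι → α} {t : Set ι}
    (ht : t.Finite) (hf : ∀ i ∈ t, f i ∈ L) (heq : a = ⨅ i ∈ t, f i) : ∃ i ∈ t, a = f i := by
  induction t, ht using Set.Finite.induction_on with
  | empty => simp [heq] at ha
  | @insert j s _ hs ih =>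
    rw [iInf_insert] at heq
    have hfs : ∀ i ∈ s, f i ∈ L := fun i hi => hf i (mem_insert_of_mem j hi)
    rcases hirr _ (hf j (mem_insert j s)) _ (hL.biInf_mem hs htop hfs) heq with h | h
    · exact ⟨j, mem_insert j s, h⟩
    · obtain ⟨i, hi, rfl⟩ := ih hfs h
      exact ⟨i, mem_insert_of_mem j hi, rfl⟩

end MeetIrreducible

/-- The paper's `T_i`. -/
def avoidingSup {α : Type*} (L : Set (Set α)) (i : α) : Set α :=
  ⋃₀ {J | J ∈ L ∧ i ∉ J}

section avoidingSup

variable {α : Type*} {L : Set (Set α)} {i : α}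

theorem avoidingSup_mem [Finite α] (hL : SupClosed L) (hbot : ∅ ∈ L) : avoidingSup L i ∈ L :=
  hL.sSup_mem (toFinite _) hbot fun _ hJ => hJ.1

theorem notMem_avoidingSup : i ∉ avoidingSup L i := by
  rintro ⟨J, ⟨_, hiJ⟩, hiJ'⟩
  exact hiJ hiJ'

theorem subset_avoidingSup {J : Set α} (hJ : J ∈ L) (hiJ : i ∉ J) : J ⊆ avoidingSup L i :=
  subset_sUnion_of_mem ⟨hJ, hiJ⟩

theorem avoidingSup_ne_univ : avoidingSup L i ≠ univ :=
  fun h => notMem_avoidingSup (h ▸ mem_univ i)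

theorem avoidingSup_eq_or_eq_of_eq_inter {B C : Set α} (hB : B ∈ L) (hC : C ∈ L)
    (h : avoidingSup L i = B ∩ C) : avoidingSup L i = B ∨ avoidingSup L i = C := by
  have hi : i ∉ B ∩ C := h ▸ notMem_avoidingSup
  rw [mem_inter_iff, not_and_or] at hi
  rcases hi with hiB | hiC
  · exact Or.inl ((h ▸ inter_subset_left).antisymm (subset_avoidingSup hB hiB))
  · exact Or.inr ((h ▸ inter_subset_right).antisymm (subset_avoidingSup hC hiC))

theorem biInter_compl_avoidingSup {a : Set α} (ha : a ∈ L) : ⋂ i ∈ aᶜ, avoidingSup L i = a := by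
  refine (subset_iInter₂ fun i (hi : i ∈ aᶜ) => subset_avoidingSup ha hi).antisymm' fun x hx => ?_
  by_contra hxa
  exact notMem_avoidingSup (mem_iInter₂.mp hx x hxa)

end avoidingSup

/-- In a sublattice `L` of the powerset of `Fin r` containing `∅` and `univ`,
the sets `T i` (greatest member of `L` not containing `i`) lie in `L`, are
meet-irreducible, and every meet-irreducible element of `L` is one of them. -/
theorem stmt_3 {r : ℕ} (L : Set (Set (Fin r)))
    (hunion : ∀ X ∈ L, ∀ Y ∈ L, X ∪ Y ∈ L)
    (hinter : ∀ X ∈ L, ∀ Y ∈ L, X ∩ Y ∈ L)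
    (hbot : ∅ ∈ L) (htop : Set.univ ∈ L)
    (T : Fin r → Set (Fin r))
    (hT : ∀ i, T i = ⋃₀ {J | J ∈ L ∧ i ∉ J}) :
    (∀ i, T i ∈ L) ∧
    (∀ i, T i ≠ Set.univ ∧
      ∀ B ∈ L, ∀ C ∈ L, T i = B ∩ C → T i = B ∨ T i = C) ∧
    (∀ a ∈ L, (a ≠ Set.univ ∧ ∀ B ∈ L, ∀ C ∈ L, a = B ∩ C → a = B ∨ a = C) →
      ∃ i, a = T i) := by
  obtain rfl : T = avoidingSup L := funext hT
  refine ⟨fun i => avoidingSup_mem hunion hbot,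
    fun i => ⟨avoidingSup_ne_univ, fun B hB C hC => avoidingSup_eq_or_eq_of_eq_inter hB hC⟩, ?_⟩
  rintro a ha ⟨ha_ne, hirr⟩
  have hTL : ∀ i ∈ aᶜ, avoidingSup L i ∈ L := fun i _ => avoidingSup_mem hunion hbot
  obtain ⟨i, -, hi⟩ := InfClosed.exists_eq_of_eq_biInf hinter htop ha_ne hirr (toFinite _) hTL
    (biInter_compl_avoidingSup ha).symm
  exact ⟨i, hi⟩
end

section
/- For 1 ≤ i < r, the family L_i consisting of all subsets X of [r] such that X does not lie in any interval [{1,...,j}, complement of {j+1}] for 1 ≤ j ≤ i (i.e., for every j with 1 ≤ j ≤ i, it is not the case that {1,...,j} ⊆ X and j+1 ∉ X) is closed under unions and intersections, contains ∅ and [r], and has exactly (1/2 + 1/2^{i+1})·2^r = 2^{r-1} + 2^{r-i-1} members. -/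
/-!
A set `X` avoids all the intervals `[{0,…,j-1}, univ \ {j}]`, `1 ≤ j ≤ i`, exactly when
`0 ∉ X` or `{0,…,i} ⊆ X`. Both alternatives are preserved by unions and intersections, and they
are disjoint, accounting for `2^(r-1)` and `2^(r-i-1)` sets respectively.
-/

open Finset

namespace Finset
variable {α : Type*} [DecidableEq α] {a : α} {S X Y : Finset α}

theorem notMem_or_subset_union (hX : a ∉ X ∨ S ⊆ X) (hY : a ∉ Y ∨ S ⊆ Y) :
    a ∉ X ∪ Y ∨ S ⊆ X ∪ Y := by
  rcases hX with hX | hX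
  · rcases hY with hY | hY
    · exact .inl (by simp [hX, hY])
    · exact .inr (hY.trans subset_union_right)
  · exact .inr (hX.trans subset_union_left)

theorem notMem_or_subset_inter (hX : a ∉ X ∨ S ⊆ X) (hY : a ∉ Y ∨ S ⊆ Y) :
    a ∉ X ∩ Y ∨ S ⊆ X ∩ Y := by
  rcases hX with hX | hX
  · exact .inl fun h ↦ hX (mem_of_mem_inter_left h)
  · rcases hY with hY | hY
    · exact .inl fun h ↦ hY (mem_of_mem_inter_right h)
    · exact .inr (subset_inter hX hY)

variable [Fintype α]

theorem card_filter_notMem (a : α) :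
    #{X : Finset α | a ∉ X} = 2 ^ (Fintype.card α - 1) := by
  have : ({X | a ∉ X} : Finset (Finset α)) = ({X | X ⊆ univ.erase a} : Finset _) := by
    simp [subset_erase]
  rw [this, filter_subset_univ, card_powerset, card_erase_of_mem (mem_univ a), card_univ]

theorem card_filter_supset (S : Finset α) :
    #{X : Finset α | S ⊆ X} = 2 ^ (Fintype.card α - #S) := by
  have : ({X | S ⊆ X} : Finset (Finset α)) = Icc S univ := by ext; simp
  rw [this, card_Icc_finset (subset_univ S), card_univ]

theorem card_filter_notMem_or_subset (ha : a ∈ S) :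
    #{X : Finset α | a ∉ X ∨ S ⊆ X} = 2 ^ (Fintype.card α - 1) + 2 ^ (Fintype.card α - #S) := by
  rw [filter_or, card_union_of_disjoint, card_filter_notMem, card_filter_supset]
  exact disjoint_filter.2 fun X _ haX hSX ↦ haX (hSX ha)

end Finset

namespace Fin
variable {r i : ℕ}

/-- The paper's condition, in `0`-based labels: `X` lies in no interval
`[{0,…,j-1}, univ \ {j}]` with `1 ≤ j ≤ i`. -/
def AvoidsPrefixIntervals (h : i < r) (X : Finset (Fin r)) : Prop :=
  ∀ (j : ℕ) (_ : 1 ≤ j) (hji : j ≤ i),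
    ¬((∀ k : Fin r, (k : ℕ) < j → k ∈ X) ∧ (⟨j, lt_of_le_of_lt hji h⟩ : Fin r) ∉ X)

/- If `0 ∈ X` but `{0,…,i} ⊄ X`, the least `m ≤ i` missing from `X` is positive and all
smaller elements lie in `X`, so `X` lies in the interval indexed by `j = m`. -/
theorem avoidsPrefixIntervals_iff (h : i < r) (X : Finset (Fin r)) :
    AvoidsPrefixIntervals h X ↔ (⟨0, by omega⟩ : Fin r) ∉ X ∨ Iic ⟨i, h⟩ ⊆ X := by
  constructor
  · refine fun hX ↦ or_iff_not_imp_left.2 fun h0 ↦ ?_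
    rw [not_not] at h0
    by_contra hsub
    have hne : (Iic ⟨i, h⟩ \ X).Nonempty := sdiff_nonempty.2 hsub
    set m := (Iic ⟨i, h⟩ \ X).min' hne
    have hm : m ∈ Iic ⟨i, h⟩ \ X := min'_mem _ hne
    rw [mem_sdiff, mem_Iic] at hm
    have hm0 : 1 ≤ (m : ℕ) :=
      Nat.one_le_iff_ne_zero.2 fun hm0 ↦ hm.2 (by rwa [show m = ⟨0, _⟩ from Fin.ext hm0])
    refine hX m hm0 hm.1 ⟨fun k hk ↦ ?_, hm.2⟩
    by_contra hkX
    exact (min'_le _ k (mem_sdiff.2 ⟨mem_Iic.2 ((lt_def.2 hk).le.trans hm.1), hkX⟩)).not_gt hk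
  · rintro (h0 | hsub) j hj hji ⟨hpre, hjX⟩
    · exact h0 (hpre _ hj)
    · exact hjX (hsub (mem_Iic.2 (le_def.2 hji)))

end Fin

theorem stmt_4_general {r i : ℕ} (h2 : i < r)
    (L : Set (Finset (Fin r)))
    (hL : L = {X | ∀ (j : ℕ) (_ : 1 ≤ j) (hji : j ≤ i),
      ¬((∀ k : Fin r, (k : ℕ) < j → k ∈ X) ∧
        (⟨j, lt_of_le_of_lt hji h2⟩ : Fin r) ∉ X)}) :
    (∀ X ∈ L, ∀ Y ∈ L, X ∪ Y ∈ L ∧ X ∩ Y ∈ L) ∧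
    ∅ ∈ L ∧ Finset.univ ∈ L ∧
    L.ncard = 2 ^ (r - 1) + 2 ^ (r - i - 1) := by
  have hmem (X : Finset (Fin r)) : X ∈ L ↔ (⟨0, by omega⟩ : Fin r) ∉ X ∨ Iic ⟨i, h2⟩ ⊆ X := by
    rw [hL]
    exact Fin.avoidsPrefixIntervals_iff h2 X
  have hLfin : L = ↑({X | (⟨0, by omega⟩ : Fin r) ∉ X ∨ Iic ⟨i, h2⟩ ⊆ X} : Finset _) := by
    ext X
    simp [hmem]
  simp only [hmem]
  refine ⟨fun X hX Y hY ↦ ⟨notMem_or_subset_union hX hY, notMem_or_subset_inter hX hY⟩,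
    .inl (notMem_empty _), .inr (subset_univ _), ?_⟩
  have h0 : (⟨0, by omega⟩ : Fin r) ∈ Iic ⟨i, h2⟩ := mem_Iic.2 (Fin.le_def.2 (Nat.zero_le i))
  rw [hLfin, Set.ncard_coe_finset, card_filter_notMem_or_subset h0, Fintype.card_fin, Fin.card_Iic, Nat.sub_sub]

/-- For `1 ≤ i < r`, the family of subsets of `[r]` avoiding all intervals
`[{1,…,j}, complement of {j+1}]` for `1 ≤ j ≤ i` is a sublattice of the
powerset containing `∅` and `[r]`, and has `2^(r-1) + 2^(r-i-1)` members.
(Here `[r]` is `Fin r` with `0`-based labels: the `1`-based element `m`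
corresponds to the `Fin r` element with value `m - 1`.) -/
theorem stmt_4 {r i : ℕ} (h1 : 1 ≤ i) (h2 : i < r)
    (L : Set (Finset (Fin r)))
    (hL : L = {X | ∀ (j : ℕ) (_ : 1 ≤ j) (hji : j ≤ i),
      ¬((∀ k : Fin r, (k : ℕ) < j → k ∈ X) ∧
        (⟨j, lt_of_le_of_lt hji h2⟩ : Fin r) ∉ X)}) :
    (∀ X ∈ L, ∀ Y ∈ L, X ∪ Y ∈ L ∧ X ∩ Y ∈ L) ∧
    ∅ ∈ L ∧ Finset.univ ∈ L ∧
    L.ncard = 2 ^ (r - 1) + 2 ^ (r - i - 1) :=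
  stmt_4_general h2 L hL
end

section
/- Let 𝒜 = (A_i : i ∈ [r]) be a presentation of a transversal matroid M on E. For each i, the complement E \ A_i is a flat of M. -/
/-- `Y` is a partial transversal of the set system `A : Fin r → Set α`. -/
def IsPartialTransversal {α : Type*} {r : ℕ} (A : Fin r → Set α) (Y : Set α) : Prop :=
  ∃ φ : α → Fin r, Set.InjOn φ Y ∧ ∀ y ∈ Y, y ∈ A (φ y)

open Set

/-- Since `Y` misses `A i`, its matching never uses the index `i`, which is thus free for `x`. -/
theorem IsPartialTransversal.insert_of_disjoint {α : Type*} {r : ℕ} {A : Fin r → Set α}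
    {Y : Set α} {i : Fin r} {x : α} (hY : IsPartialTransversal A Y) (hYA : Disjoint Y (A i))
    (hx : x ∈ A i) : IsPartialTransversal A (insert x Y) := by
  classical
  obtain ⟨φ, hinj, hmem⟩ := hY
  have hxY : x ∉ Y := fun h ↦ hYA.notMem_of_mem_right hx h
  have hφ_ne : ∀ y ∈ Y, φ y ≠ i := fun y hy h ↦ hYA.notMem_of_mem_left hy (h ▸ hmem y hy)
  have hupd : EqOn (Function.update φ x i) φ Y :=
    fun y hy ↦ Function.update_of_ne (ne_of_mem_of_not_mem hy hxY) _ _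
  refine ⟨Function.update φ x i, ?_, ?_⟩
  · rw [injOn_insert hxY, hupd.injOn_iff, hupd.image_eq, Function.update_self]
    exact ⟨hinj, fun ⟨y, hy, hyi⟩ ↦ hφ_ne y hy hyi⟩
  · rintro y (rfl | hy)
    · rwa [Function.update_self]
    · rw [hupd hy]
      exact hmem y hy

theorem Matroid.isFlat_of_forall_isBasis_insert_indep {α : Type*} {M : Matroid α} {F : Set α}
    (hF : F ⊆ M.E) (h : ∀ I, M.IsBasis I F → ∀ e ∈ M.E \ F, M.Indep (insert e I)) :
    M.IsFlat F := by
  refine ⟨fun I X hIF hIX e heX ↦ ?_, hF⟩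
  by_contra heF
  have heI := hIX.mem_of_insert_indep heX (h I hIF e ⟨hIX.subset_ground heX, heF⟩)
  exact heF (hIF.subset heI)

theorem stmt_11_general {α : Type*} {r : ℕ} (E : Set α) (A : Fin r → Set α)
    (M : Matroid α) (hME : M.E = E)
    (hInd : ∀ I, M.Indep I ↔ I ⊆ E ∧ IsPartialTransversal A I) :
    ∀ i, M.IsFlat (E \ A i) := by
  intro i
  subst hME
  refine M.isFlat_of_forall_isBasis_insert_indep sdiff_subset fun I hI e he ↦ ?_
  obtain ⟨hIE, hIT⟩ := (hInd I).1 hI.indep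
  have heA : e ∈ A i := by_contra fun heA ↦ he.2 ⟨he.1, heA⟩
  have hIA : Disjoint I (A i) := (subset_sdiff.1 hI.subset).2
  exact (hInd _).2 ⟨insert_subset he.1 hIE, hIT.insert_of_disjoint hIA heA⟩

/-- For a presentation `𝒜 = (A_i)` of a transversal matroid `M` on `E`,
each complement `E ∖ A_i` is a flat of `M`. -/
theorem stmt_11 {α : Type*} {r : ℕ} (E : Set α) (A : Fin r → Set α)
    (hA : ∀ i, A i ⊆ E)
    (M : Matroid α) (hME : M.E = E)
    (hInd : ∀ I, M.Indep I ↔ I ⊆ E ∧ IsPartialTransversal A I) :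
    ∀ i, M.IsFlat (E \ A i) :=
  stmt_11_general E A M hME hInd
end

section
/- Let 𝒜 = (A_i : i ∈ [r]) be a presentation of a transversal matroid M on E, and define the support s_𝒜(X) = {i ∈ [r] : X ∩ A_i ≠ ∅}. If C is a circuit of M and e ∈ C, then |s_𝒜(C)| = |s_𝒜(C \ {e})| = |C| - 1, and hence s_𝒜(C) = s_𝒜(C \ {e}). -/
/-- The `𝒜`-support of `X`: the indices `i` with `X ∩ A_i ≠ ∅`. -/
def supp {α : Type*} {r : ℕ} (A : Fin r → Set α) (X : Set α) : Set (Fin r) :=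
  {i | (X ∩ A i).Nonempty}

section Transversal

variable {α : Type*} {r : ℕ} (A : Fin r → Set α)

theorem supp_mono : Monotone (supp A) := by
  rintro X Y h i ⟨x, hx, hxi⟩
  exact ⟨x, h hx, hxi⟩

variable {A}

theorem IsPartialTransversal.ncard_le_ncard_supp {X : Set α} (h : IsPartialTransversal A X) :
    X.ncard ≤ (supp A X).ncard := by
  obtain ⟨φ, hinj, hmem⟩ := h
  have himg : φ '' X ⊆ supp A X := by
    rintro i ⟨x, hx, rfl⟩
    exact ⟨x, hx, hmem x hx⟩
  calc X.ncard = (φ '' X).ncard := hinj.ncard_image.symm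
    _ ≤ (supp A X).ncard := Set.ncard_le_ncard himg (Set.toFinite _)

-- A partial transversal is witnessed by a total map `α → Fin r`: for `r = 0` and nonempty `α`
-- not even `∅` is one.
theorem isPartialTransversal_of_forall_ncard_le {Y : Set α} (hφ : Nonempty (α → Fin r))
    (hY : ∀ X ⊆ Y, X.Finite → X.ncard ≤ (supp A X).ncard) : IsPartialTransversal A Y := by
  classical
  obtain ⟨f, hf, hfA⟩ := (Fintype.all_card_le_filter_rel_iff_exists_injective
    (fun (y : Y) i => (y : α) ∈ A i)).mp fun s => by
      have hsupp : supp A (Subtype.val '' (s : Set Y)) =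
          ↑({i | ∃ y ∈ s, (y : α) ∈ A i} : Finset (Fin r)) := by
        ext i; simp [supp, Set.Nonempty]
      have := hY _ (Subtype.coe_image_subset _ _) (s.finite_toSet.image _)
      rwa [Set.ncard_image_of_injective _ Subtype.val_injective, Set.ncard_coe_finset, hsupp,
        Set.ncard_coe_finset] at this
  refine ⟨Function.extend Subtype.val f hφ.some, ?_, fun y hy => ?_⟩
  · rintro x hx y hy hxy
    rw [Subtype.val_injective.extend_apply f _ ⟨x, hx⟩,
      Subtype.val_injective.extend_apply f _ ⟨y, hy⟩] at hxy
    exact congrArg Subtype.val (hf hxy)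
  · simpa [Subtype.val_injective.extend_apply f _ ⟨y, hy⟩] using hfA ⟨y, hy⟩

theorem ncard_supp_lt_of_minimal_not_isPartialTransversal {C : Set α}
    (hφ : Nonempty (α → Fin r)) (hC : ¬ IsPartialTransversal A C)
    (hmin : ∀ D ⊂ C, IsPartialTransversal A D) : (supp A C).ncard < C.ncard := by
  by_contra! hle
  refine hC (isPartialTransversal_of_forall_ncard_le hφ fun X hXC _ => ?_)
  obtain rfl | hXC := hXC.eq_or_ssubset
  · exact hle
  · exact (hmin X hXC).ncard_le_ncard_supp

theorem ncard_supp_of_minimal_not_isPartialTransversal {C : Set α} {e : α}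
    (hφ : Nonempty (α → Fin r)) (hC : ¬ IsPartialTransversal A C)
    (hmin : ∀ D ⊂ C, IsPartialTransversal A D) (he : e ∈ C) :
    (supp A C).ncard = C.ncard - 1 ∧
    (supp A (C \ {e})).ncard = C.ncard - 1 ∧
    supp A C = supp A (C \ {e}) := by
  have hlt := ncard_supp_lt_of_minimal_not_isPartialTransversal hφ hC hmin
  have hle := (hmin _ (Set.sdiff_singleton_ssubset.mpr he)).ncard_le_ncard_supp
  rw [Set.ncard_sdiff_singleton_of_mem he] at hle
  have hsub : supp A (C \ {e}) ⊆ supp A C := supp_mono A Set.sdiff_subset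
  have hmono := Set.ncard_le_ncard hsub (Set.toFinite _)
  exact ⟨by omega, by omega, (Set.eq_of_subset_of_ncard_le hsub (by omega)).symm⟩

end Transversal

theorem stmt_12_general {α : Type*} {r : ℕ} (E : Set α) (A : Fin r → Set α)
    (M : Matroid α) (hME : M.E = E)
    (hInd : ∀ I, M.Indep I ↔ I ⊆ E ∧ IsPartialTransversal A I)
    (C : Set α) (hCdep : M.Dep C) (hCmin : ∀ D, D ⊂ C → M.Indep D)
    (e : α) (he : e ∈ C) :
    (supp A C).ncard = C.ncard - 1 ∧
    (supp A (C \ {e})).ncard = C.ncard - 1 ∧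
    supp A C = supp A (C \ {e}) := by
  obtain ⟨-, φ, -⟩ := (hInd ∅).mp M.empty_indep
  refine ncard_supp_of_minimal_not_isPartialTransversal ⟨φ⟩ (fun hC => ?_)
    (fun D hD => ((hInd D).mp (hCmin D hD)).2) he
  exact hCdep.not_indep ((hInd C).mpr ⟨hME ▸ hCdep.subset_ground, hC⟩)

/-- If `C` is a circuit of the transversal matroid `M[𝒜]` and `e ∈ C`, then
`|s_𝒜(C)| = |s_𝒜(C ∖ {e})| = |C| - 1`, and hence `s_𝒜(C) = s_𝒜(C ∖ {e})`. -/
theorem stmt_12 {α : Type*} {r : ℕ} [Finite α] (E : Set α) (A : Fin r → Set α)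
    (hA : ∀ i, A i ⊆ E)
    (M : Matroid α) (hME : M.E = E)
    (hInd : ∀ I, M.Indep I ↔ I ⊆ E ∧ IsPartialTransversal A I)
    (C : Set α) (hCdep : M.Dep C) (hCmin : ∀ D, D ⊂ C → M.Indep D)
    (e : α) (he : e ∈ C) :
    (supp A C).ncard = C.ncard - 1 ∧
    (supp A (C \ {e})).ncard = C.ncard - 1 ∧
    supp A C = supp A (C \ {e}) :=
  stmt_12_general E A M hME hInd C hCdep hCmin e he
end

section
/- Let 𝒜 = (A_i : i ∈ [r]) be a presentation of a transversal matroid M on E with support function s_𝒜. If X ⊆ E satisfies |s_𝒜(X)| = r_M(X), then the closure of X in M equals {e ∈ E : s_𝒜({e}) ⊆ s_𝒜(X)}. -/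
/-- The rank of `X` in `M`: the largest size of an independent subset of `X`. -/
noncomputable def rk {α : Type*} (M : Matroid α) (X : Set α) : ℕ :=
  sSup {n | ∃ I, M.Indep I ∧ I ⊆ X ∧ I.ncard = n}

open Set

lemma rk_eq_ncard_of_isBasis {α : Type*} [Finite α] {M : Matroid α} {I X : Set α}
    (hI : M.IsBasis I X) : rk M X = I.ncard := by
  have hub : ∀ n ∈ {n | ∃ J, M.Indep J ∧ J ⊆ X ∧ J.ncard = n}, n ≤ I.ncard := by
    rintro n ⟨J, hJ, hJX, rfl⟩
    obtain ⟨J', hJ', hJJ'⟩ := hJ.subset_isBasis_of_subset hJX hI.subset_ground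
    calc J.ncard ≤ J'.ncard := ncard_le_ncard hJJ'
      _ = I.ncard := by rw [ncard_def, ncard_def, hJ'.encard_eq_encard hI]
  exact le_antisymm (csSup_le ⟨I.ncard, I, hI.indep, hI.subset, rfl⟩ hub)
    (le_csSup ⟨I.ncard, hub⟩ ⟨I, hI.indep, hI.subset, rfl⟩)

section Transversal

variable {α : Type*} {r : ℕ} {A : Fin r → Set α}

lemma image_subset_supp {φ : α → Fin r} {I X : Set α} (hIX : I ⊆ X)
    (hφ : ∀ y ∈ I, y ∈ A (φ y)) : φ '' I ⊆ supp A X := by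
  rintro _ ⟨y, hy, rfl⟩
  exact ⟨y, hIX hy, hφ y hy⟩

lemma image_eq_supp_of_ncard_le {φ : α → Fin r} {I X : Set α} (hinj : InjOn φ I)
    (hφ : ∀ y ∈ I, y ∈ A (φ y)) (hIX : I ⊆ X) (hcard : (supp A X).ncard ≤ I.ncard) :
    φ '' I = supp A X :=
  eq_of_subset_of_ncard_le (image_subset_supp hIX hφ) (by rwa [hinj.ncard_image])

lemma isPartialTransversal_insert_of_notMem_image [DecidableEq α] {φ : α → Fin r} {I : Set α}
    {e : α} {i : Fin r} (hinj : InjOn φ I) (hφ : ∀ y ∈ I, y ∈ A (φ y)) (heI : e ∉ I)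
    (he : e ∈ A i) (hi : i ∉ φ '' I) : IsPartialTransversal A (insert e I) := by
  have hagree : EqOn (Function.update φ e i) φ I := fun y hy ↦
    Function.update_of_ne (hy.ne_of_notMem heI) i φ
  refine ⟨Function.update φ e i, ?_, ?_⟩
  · rw [injOn_insert heI, hagree.image_eq, Function.update_self]
    exact ⟨hinj.congr hagree.symm, hi⟩
  · rintro y (rfl | hy)
    · rwa [Function.update_self]
    · rw [hagree hy]
      exact hφ y hy

end Transversal

section TransversalMatroid

variable {α : Type*} {r : ℕ} {A : Fin r → Set α} {M : Matroid α} {I X : Set α} {e : α}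

lemma supp_singleton_subset_of_mem_closure
    (hInd : ∀ I, M.Indep I ↔ I ⊆ M.E ∧ IsPartialTransversal A I) (hI : M.IsBasis I X)
    (hcard : (supp A X).ncard = I.ncard) (he : e ∈ M.closure X) : supp A {e} ⊆ supp A X := by
  classical
  rintro i ⟨x, hx, hxA⟩
  have heA : e ∈ A i := mem_singleton_iff.1 hx ▸ hxA
  by_contra hi
  have heI : e ∉ I := fun heI ↦ hi ⟨e, hI.subset heI, heA⟩
  have heE : e ∈ M.E := M.closure_subset_ground X he
  obtain ⟨-, φ, hinj, hφ⟩ := (hInd I).1 hI.indep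
  have hiφ : i ∉ φ '' I := by rwa [image_eq_supp_of_ncard_le hinj hφ hI.subset hcard.le]
  have hindep : M.Indep (insert e I) := (hInd _).2
    ⟨insert_subset heE hI.indep.subset_ground,
      isPartialTransversal_insert_of_notMem_image hinj hφ heI heA hiφ⟩
  rw [← hI.closure_eq_closure] at he
  exact (hI.indep.notMem_closure_iff_of_notMem heI heE).2 hindep he

lemma mem_closure_of_supp_singleton_subset
    (hInd : ∀ I, M.Indep I ↔ I ⊆ M.E ∧ IsPartialTransversal A I) (hI : M.IsBasis I X)
    (hcard : (supp A X).ncard = I.ncard) (heE : e ∈ M.E) (hsupp : supp A {e} ⊆ supp A X) :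
    e ∈ M.closure X := by
  by_contra hecl
  have heI : e ∉ I := fun heI ↦ hecl (M.subset_closure X hI.subset_ground (hI.subset heI))
  rw [← hI.closure_eq_closure, hI.indep.notMem_closure_iff_of_notMem heI heE] at hecl
  obtain ⟨-, φ, hinj, hφ⟩ := (hInd _).1 hecl
  have himg : φ '' insert e I ⊆ supp A X := by
    rw [image_insert_eq]
    exact insert_subset (hsupp ⟨e, rfl, hφ e (mem_insert e I)⟩)
      (image_subset_supp hI.subset fun y hy ↦ hφ y (mem_insert_of_mem e hy))
  have hIfin : I.Finite := ((toFinite _).of_finite_image hinj).subset (subset_insert e I)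
  have hle := ncard_le_ncard himg
  rw [hinj.ncard_image, ncard_insert_of_notMem heI hIfin, hcard] at hle
  omega

end TransversalMatroid

theorem stmt_13_general {α : Type*} {r : ℕ} [Finite α] (E : Set α) (A : Fin r → Set α)
    (M : Matroid α) (hME : M.E = E)
    (hInd : ∀ I, M.Indep I ↔ I ⊆ E ∧ IsPartialTransversal A I)
    (X : Set α) (hX : X ⊆ E)
    (h : (supp A X).ncard = rk M X) :
    M.closure X = {e | e ∈ E ∧ supp A {e} ⊆ supp A X} := by
  subst hME
  obtain ⟨I, hI⟩ := M.exists_isBasis X hX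
  have hcard : (supp A X).ncard = I.ncard := h.trans (rk_eq_ncard_of_isBasis hI)
  ext e
  exact ⟨fun he ↦ ⟨M.closure_subset_ground X he,
      supp_singleton_subset_of_mem_closure hInd hI hcard he⟩,
    fun ⟨heE, hsupp⟩ ↦ mem_closure_of_supp_singleton_subset hInd hI hcard heE hsupp⟩

/-- If `|s_𝒜(X)| = r_M(X)`, then `cl_M(X) = {e ∈ E : s_𝒜(e) ⊆ s_𝒜(X)}`. -/
theorem stmt_13 {α : Type*} {r : ℕ} [Finite α] (E : Set α) (A : Fin r → Set α)
    (hA : ∀ i, A i ⊆ E)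
    (M : Matroid α) (hME : M.E = E)
    (hInd : ∀ I, M.Indep I ↔ I ⊆ E ∧ IsPartialTransversal A I)
    (X : Set α) (hX : X ⊆ E)
    (h : (supp A X).ncard = rk M X) :
    M.closure X = {e | e ∈ E ∧ supp A {e} ⊆ supp A X} :=
  stmt_13_general E A M hME hInd X hX h
end

section
/- Let 𝒜 = (A_i : i ∈ [r]) be a presentation of a transversal matroid M on E with M = M[𝒜]. For subsets X and Y of E, if r_M(X) = |s_𝒜(X)| and r_M(Y) = |s_𝒜(Y)|, then r_M(X ∪ Y) = |s_𝒜(X ∪ Y)|. -/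
lemma rk_bdd {α : Type*} [Finite α] (M : Matroid α) (X : Set α) :
    BddAbove {n | ∃ I, M.Indep I ∧ I ⊆ X ∧ I.ncard = n} := by
  refine ⟨Nat.card α, ?_⟩
  rintro n ⟨I, -, -, rfl⟩
  simpa [Set.ncard_univ] using Set.ncard_le_ncard (Set.subset_univ I) Set.finite_univ

lemma rk_mem {α : Type*} [Finite α] (M : Matroid α) (X : Set α) :
    rk M X ∈ {n | ∃ I, M.Indep I ∧ I ⊆ X ∧ I.ncard = n} :=
  Nat.sSup_mem ⟨0, ∅, M.empty_indep, Set.empty_subset X, Set.ncard_empty α⟩ (rk_bdd M X)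

/-- Upper bound: the rank is at most the size of the support. -/
lemma rk_le_supp {α : Type*} {r : ℕ} [Finite α] (E : Set α) (A : Fin r → Set α)
    (M : Matroid α) (hInd : ∀ I, M.Indep I ↔ I ⊆ E ∧ IsPartialTransversal A I)
    (X : Set α) : rk M X ≤ (supp A X).ncard := by
  refine csSup_le ⟨0, ∅, M.empty_indep, Set.empty_subset X, Set.ncard_empty α⟩ ?_
  rintro n ⟨I, hI, hIX, rfl⟩
  obtain ⟨-, φ, hφinj, hφmem⟩ := (hInd I).1 hI
  have himg : φ '' I ⊆ supp A X := by
    rintro - ⟨y, hy, rfl⟩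
    exact ⟨y, hIX hy, hφmem y hy⟩
  calc I.ncard = (φ '' I).ncard := (Set.ncard_image_of_injOn hφinj).symm
    _ ≤ (supp A X).ncard := Set.ncard_le_ncard himg (Set.toFinite _)

/-- From `rk M Z = |supp A Z|`, extract an injective system of representatives. -/
lemma exists_rep {α : Type*} {r : ℕ} [Finite α] [Nonempty α] (E : Set α) (A : Fin r → Set α)
    (M : Matroid α) (hInd : ∀ I, M.Indep I ↔ I ⊆ E ∧ IsPartialTransversal A I)
    (Z : Set α) (hr : rk M Z = (supp A Z).ncard) :
    ∃ g : Fin r → α, Set.InjOn g (supp A Z) ∧ ∀ i ∈ supp A Z, g i ∈ Z ∩ A i := by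
  obtain ⟨I, hI, hIZ, hIcard⟩ := rk_mem M Z
  obtain ⟨-, φ, hφinj, hφmem⟩ := (hInd I).1 hI
  have himg : φ '' I ⊆ supp A Z := by
    rintro - ⟨y, hy, rfl⟩
    exact ⟨y, hIZ hy, hφmem y hy⟩
  have heq : φ '' I = supp A Z := by
    refine Set.eq_of_subset_of_ncard_le himg ?_ (Set.toFinite _)
    rw [Set.ncard_image_of_injOn hφinj, hIcard, hr]
  classical
  refine ⟨fun i => if h : ∃ y ∈ I, φ y = i then h.choose else Classical.arbitrary α, ?_, ?_⟩
  · intro i hi j hj hij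
    have hi' : ∃ y ∈ I, φ y = i := by rw [← heq] at hi; obtain ⟨y, hy, hyi⟩ := hi; exact ⟨y, hy, hyi⟩
    have hj' : ∃ y ∈ I, φ y = j := by rw [← heq] at hj; obtain ⟨y, hy, hyj⟩ := hj; exact ⟨y, hy, hyj⟩
    simp only [dif_pos hi', dif_pos hj'] at hij
    rw [← hi'.choose_spec.2, ← hj'.choose_spec.2, hij]
  · intro i hi
    have hi' : ∃ y ∈ I, φ y = i := by rw [← heq] at hi; obtain ⟨y, hy, hyi⟩ := hi; exact ⟨y, hy, hyi⟩
    simp only [dif_pos hi']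
    obtain ⟨hy, hyi⟩ := hi'.choose_spec
    refine ⟨hIZ hy, ?_⟩
    have h2 := hφmem _ hy
    rwa [hyi] at h2

lemma supp_union {α : Type*} {r : ℕ} (A : Fin r → Set α) (X Y : Set α) :
    supp A (X ∪ Y) = supp A X ∪ supp A Y := by
  ext i
  simp only [supp, Set.mem_setOf_eq, Set.mem_union, Set.union_inter_distrib_right,
    Set.union_nonempty]

/-- If `r_M(X) = |s_𝒜(X)|` and `r_M(Y) = |s_𝒜(Y)|`, then
`r_M(X ∪ Y) = |s_𝒜(X ∪ Y)|`. -/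
theorem stmt_14 {α : Type*} {r : ℕ} [Finite α] (E : Set α) (A : Fin r → Set α)
    (hA : ∀ i, A i ⊆ E)
    (M : Matroid α) (hME : M.E = E)
    (hInd : ∀ I, M.Indep I ↔ I ⊆ E ∧ IsPartialTransversal A I)
    (X Y : Set α) (hX : X ⊆ E) (hY : Y ⊆ E)
    (hrX : rk M X = (supp A X).ncard) (hrY : rk M Y = (supp A Y).ncard) :
    rk M (X ∪ Y) = (supp A (X ∪ Y)).ncard := by
  classical
  refine le_antisymm (rk_le_supp E A M hInd _) ?_
  rcases Set.eq_empty_or_nonempty (supp A (X ∪ Y)) with hsupp | hsupp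
  · simp [hsupp]
  -- the ambient type is nonempty, and so is `Fin r`
  obtain ⟨i₀, z₀, hz₀⟩ := hsupp
  haveI : Nonempty α := ⟨z₀⟩
  haveI : Nonempty (Fin r) := ⟨i₀⟩
  obtain ⟨gX, hgXinj, hgX⟩ := exists_rep E A M hInd X hrX
  obtain ⟨gY, hgYinj, hgY⟩ := exists_rep E A M hInd Y hrY
  set S := supp A (X ∪ Y) with hS
  have hSXY : S = supp A X ∪ supp A Y := supp_union A X Y
  set g : Fin r → α := fun i => if i ∈ supp A X then gX i else gY i with hg
  have hgmem : ∀ i ∈ S, g i ∈ (X ∪ Y) ∩ A i := by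
    intro i hi
    by_cases h : i ∈ supp A X
    · have hgi : g i = gX i := if_pos h
      obtain ⟨h1, h2⟩ := hgX i h
      rw [hgi]
      exact ⟨Or.inl h1, h2⟩
    · have hiY : i ∈ supp A Y := by
        rw [hSXY] at hi; rcases hi with h' | h'
        · exact absurd h' h
        · exact h'
      have hgi : g i = gY i := if_neg h
      obtain ⟨h1, h2⟩ := hgY i hiY
      rw [hgi]
      exact ⟨Or.inr h1, h2⟩
  have hginj : Set.InjOn g S := by
    intro i hi j hj hij
    by_cases hiX : i ∈ supp A X <;> by_cases hjX : j ∈ supp A X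
    · exact hgXinj hiX hjX (by simpa [hg, hiX, hjX] using hij)
    · -- mixed case : gX i = gY j with j ∉ supp A X, contradiction
      exfalso
      have hjY : j ∈ supp A Y := by
        rw [hSXY] at hj; rcases hj with h' | h' <;> [exact absurd h' hjX; exact h']
      have h1 : gX i ∈ X := (hgX i hiX).1
      have h2 : gY j ∈ A j := (hgY j hjY).2
      have : gX i = gY j := by simpa [hg, hiX, hjX] using hij
      exact hjX ⟨gX i, h1, this ▸ h2⟩
    · exfalso
      have hiY : i ∈ supp A Y := by
        rw [hSXY] at hi; rcases hi with h' | h' <;> [exact absurd h' hiX; exact h']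
      have h1 : gX j ∈ X := (hgX j hjX).1
      have h2 : gY i ∈ A i := (hgY i hiY).2
      have : gY i = gX j := by simpa [hg, hiX, hjX] using hij
      exact hiX ⟨gX j, h1, this ▸ h2⟩
    · have hiY : i ∈ supp A Y := by
        rw [hSXY] at hi; rcases hi with h' | h' <;> [exact absurd h' hiX; exact h']
      have hjY : j ∈ supp A Y := by
        rw [hSXY] at hj; rcases hj with h' | h' <;> [exact absurd h' hjX; exact h']
      exact hgYinj hiY hjY (by simpa [hg, hiX, hjX] using hij)
  -- the independent set
  set I₀ : Set α := g '' S with hI₀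
  have hI₀sub : I₀ ⊆ X ∪ Y := by
    rintro - ⟨i, hi, rfl⟩
    exact (hgmem i hi).1
  have hI₀card : I₀.ncard = S.ncard := Set.ncard_image_of_injOn hginj
  -- the inverse map, witnessing that `I₀` is a partial transversal
  have hindep : M.Indep I₀ := by
    rw [hInd]
    refine ⟨hI₀sub.trans (Set.union_subset hX hY), ?_⟩
    refine ⟨fun y => if h : ∃ i ∈ S, g i = y then h.choose else Classical.arbitrary (Fin r),
      ?_, ?_⟩
    · rintro - ⟨i, hi, rfl⟩ - ⟨j, hj, rfl⟩ hij
      have hi' : ∃ k ∈ S, g k = g i := ⟨i, hi, rfl⟩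
      have hj' : ∃ k ∈ S, g k = g j := ⟨j, hj, rfl⟩
      simp only [dif_pos hi', dif_pos hj'] at hij
      rw [← hi'.choose_spec.2, ← hj'.choose_spec.2, hij]
    · rintro - ⟨i, hi, rfl⟩
      have hi' : ∃ k ∈ S, g k = g i := ⟨i, hi, rfl⟩
      simp only [dif_pos hi']
      obtain ⟨hk, hki⟩ := hi'.choose_spec
      have h2 := (hgmem _ hk).2
      rwa [hki] at h2
  calc S.ncard = I₀.ncard := hI₀card.symm
    _ ≤ rk M (X ∪ Y) := le_csSup (rk_bdd M _) ⟨I₀, hindep, hI₀sub, rfl⟩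
end

section
/- Let 𝒜 = (A_i : i ∈ [r]) be a presentation of a transversal matroid M on E. If X is a cyclic set of M (a union of circuits, equivalently M restricted to X has no coloops), then |s_𝒜(X)| = r_M(X). -/
/-- A circuit of `M` : a minimal dependent set. -/
def Circuit {α : Type*} (M : Matroid α) (C : Set α) : Prop :=
  M.Dep C ∧ ∀ D, D ⊂ C → M.Indep D

/-- If `X` is a cyclic set (a union of circuits) of the transversal matroid
`M[𝒜]`, then `|s_𝒜(X)| = r_M(X)`. -/
theorem stmt_15 {α : Type*} {r : ℕ} [Finite α] (E : Set α) (A : Fin r → Set α)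
    (hA : ∀ i, A i ⊆ E)
    (M : Matroid α) (hME : M.E = E)
    (hInd : ∀ I, M.Indep I ↔ I ⊆ E ∧ IsPartialTransversal A I)
    (X : Set α) (hX : X ⊆ E)
    (hcyc : ∀ e ∈ X, ∃ C, C ⊆ X ∧ Circuit M C ∧ e ∈ C) :
    (supp A X).ncard = rk M X := by
  classical
  have : Fintype α := Fintype.ofFinite α
  obtain ⟨-, φ₀, -, -⟩ := (hInd ∅).mp M.empty_indep
  set t : Fin r → Finset α := fun i => (X ∩ A i).toFinset with ht
  have htmem : ∀ i a, a ∈ t i ↔ a ∈ X ∧ a ∈ A i := by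
    intro i a; simp [ht]
  have indep_of : ∀ (Y : Set α), Y ⊆ X → ∀ g : α → Fin r, Set.InjOn g Y →
      (∀ a ∈ Y, a ∈ A (g a)) → M.Indep Y := by
    intro Y hYX g hginj hgmem
    exact (hInd Y).mpr ⟨hYX.trans hX, g, hginj, hgmem⟩
  -- Hall's condition for the family (X ∩ A i) over indices in the support,
  -- proved from cyclicity by a minimal-counterexample argument.
  have hall : ∀ S : Finset (Fin r), ↑S ⊆ supp A X → S.card ≤ (S.biUnion t).card := by
    intro S
    induction S using Finset.strongInduction with
    | _ S ih =>
      intro hS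
      by_contra hlt
      push_neg at hlt
      have hSne : S.Nonempty := by
        rcases S.eq_empty_or_nonempty with h | h
        · simp [h] at hlt
        · exact h
      obtain ⟨i₀, hi₀⟩ := hSne
      -- Hall over S.erase i₀ holds by minimality
      have hcond : ∀ s : Finset {x // x ∈ S.erase i₀},
          s.card ≤ (s.biUnion (fun x => t x.1)).card := by
        intro s
        have h2 : s.image Subtype.val ⊂ S := by
          refine Finset.ssubset_of_subset_of_ssubset ?_ (Finset.erase_ssubset hi₀)
          intro x hx; obtain ⟨y, hy, rfl⟩ := Finset.mem_image.mp hx; exact y.2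
        have h3 := ih _ h2 (fun x hx => hS (h2.subset hx))
        have h4 : (s.image Subtype.val).biUnion t = s.biUnion (fun x => t x.1) := by
          ext a; simp
        rw [h4] at h3
        rwa [Finset.card_image_of_injective _ Subtype.val_injective] at h3
      obtain ⟨f, hfinj, hfmem⟩ :=
        (Finset.all_card_le_biUnion_card_iff_exists_injective _).mp hcond
      set Y := S.biUnion t with hY
      have hImsub : (Finset.univ.image f) ⊆ Y := by
        intro a ha; obtain ⟨x, -, rfl⟩ := Finset.mem_image.mp ha
        exact Finset.mem_biUnion.mpr ⟨x.1, Finset.mem_of_mem_erase x.2, hfmem x⟩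
      have hScard : 1 ≤ S.card := Finset.card_pos.mpr ⟨i₀, hi₀⟩
      have hImcard : (Finset.univ.image f).card = S.card - 1 := by
        rw [Finset.card_image_of_injective _ hfinj, Finset.card_univ, Fintype.card_coe,
          Finset.card_erase_of_mem hi₀]
      have hIm : Finset.univ.image f = Y :=
        Finset.eq_of_subset_of_card_le hImsub (by omega)
      have hsurj : ∀ a ∈ Y, ∃ x, f x = a := by
        intro a ha
        rw [← hIm] at ha
        obtain ⟨x, -, rfl⟩ := Finset.mem_image.mp ha
        exact ⟨x, rfl⟩
      -- pick y ∈ X ∩ A i₀ ⊆ Y, and a circuit C ⊆ X through y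
      obtain ⟨y, hyX, hyA⟩ := hS hi₀
      have hyY : y ∈ Y := Finset.mem_biUnion.mpr ⟨i₀, hi₀, (htmem _ _).mpr ⟨hyX, hyA⟩⟩
      obtain ⟨C, hCX, hCcirc, hyC⟩ := hcyc y hyX
      have hD : M.Indep (C \ {y}) := hCcirc.2 _
        ((Set.ssubset_iff_of_subset Set.diff_subset).mpr ⟨y, hyC, by simp⟩)
      obtain ⟨-, ψ, hψinj, hψmem⟩ := (hInd _).mp hD
      set χ : α → Fin r := fun c => if h : ∃ x, f x = c then (Classical.choose h).1 else ψ c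
        with hχ
      -- properties of χ on Y and off Y
      have hχY : ∀ c, ∀ hc : c ∈ Y, c ∈ A (χ c) ∧ χ c ∈ S ∧
          f (Classical.choose (hsurj c hc)) = c := by
        intro c hc
        have h : ∃ x, f x = c := hsurj c hc
        have hfc := Classical.choose_spec h
        have hχc : χ c = (Classical.choose h).1 := dif_pos h
        have hmem : c ∈ t (Classical.choose h).1 := by simpa only [hfc] using hfmem (Classical.choose h)
        refine ⟨?_, ?_, hfc⟩
        · rw [hχc]; exact ((htmem _ _).mp hmem).2
        · rw [hχc]; exact Finset.mem_of_mem_erase (Classical.choose h).2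
      have hχC : ∀ c ∈ C, c ∉ Y → χ c = ψ c ∧ c ∈ A (ψ c) ∧ ψ c ∉ S := by
        intro c hcC hcY
        have hne : ¬ ∃ x, f x = c := by
          rintro ⟨x, rfl⟩
          exact hcY (hIm ▸ Finset.mem_image.mpr ⟨x, Finset.mem_univ x, rfl⟩)
        have hcy : c ≠ y := fun h => hcY (h ▸ hyY)
        have hcD : c ∈ C \ {y} := ⟨hcC, hcy⟩
        have hψc : c ∈ A (ψ c) := hψmem c hcD
        refine ⟨dif_neg hne, hψc, ?_⟩
        intro hin
        exact hcY (Finset.mem_biUnion.mpr ⟨ψ c, hin, (htmem _ _).mpr ⟨hCX hcC, hψc⟩⟩)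
      have hCind : M.Indep C := by
        refine indep_of C hCX χ ?_ ?_
        · intro a haC b hbC hab
          by_cases haY : a ∈ Y <;> by_cases hbY : b ∈ Y
          · 
            have hea : χ a = (Classical.choose (hsurj a haY)).1 := dif_pos (hsurj a haY)
            have heb : χ b = (Classical.choose (hsurj b hbY)).1 := dif_pos (hsurj b hbY)
            rw [hea, heb] at hab
            have heq : Classical.choose (hsurj a haY) = Classical.choose (hsurj b hbY) :=
              Subtype.ext hab
            rw [← (hχY a haY).2.2, ← (hχY b hbY).2.2, heq]
          · exact absurd ((hχC b hbC hbY).1 ▸ hab ▸ (hχY a haY).2.1) (hχC b hbC hbY).2.2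
          · exact absurd ((hχC a haC haY).1 ▸ hab.symm ▸ (hχY b hbY).2.1) (hχC a haC haY).2.2
          · have ha := hχC a haC haY; have hb := hχC b hbC hbY
            exact hψinj ⟨haC, fun h => haY (h ▸ hyY)⟩ ⟨hbC, fun h => hbY (h ▸ hyY)⟩
              (by rw [← ha.1, ← hb.1]; exact hab)
        · intro a haC
          by_cases haY : a ∈ Y
          · exact (hχY a haY).1
          · rw [(hχC a haC haY).1]; exact (hχC a haC haY).2.1
      exact hCcirc.1.not_indep hCind
  -- Apply Hall's theorem to the whole support to get a big independent set.
  set SF : Finset (Fin r) := (supp A X).toFinset with hSF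
  have hcond : ∀ s : Finset {x // x ∈ SF},
      s.card ≤ (s.biUnion (fun x => t x.1)).card := by
    intro s
    have h2 : ↑(s.image Subtype.val) ⊆ supp A X := by
      intro x hx
      obtain ⟨y, hy, rfl⟩ := Finset.mem_image.mp hx
      exact (Set.mem_toFinset).mp y.2
    have h3 := hall _ h2
    have h4 : (s.image Subtype.val).biUnion t = s.biUnion (fun x => t x.1) := by
      ext a; simp
    rw [h4] at h3
    rwa [Finset.card_image_of_injective _ Subtype.val_injective] at h3
  obtain ⟨F, hFinj, hFmem⟩ :=
    (Finset.all_card_le_biUnion_card_iff_exists_injective _).mp hcond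
  set I : Set α := ↑(Finset.univ.image F) with hI
  have hIX : I ⊆ X := by
    intro a ha
    obtain ⟨x, -, rfl⟩ := Finset.mem_image.mp (by exact_mod_cast ha)
    exact ((htmem _ _).mp (hFmem x)).1
  have hIcard : I.ncard = (supp A X).ncard := by
    rw [hI, Set.ncard_coe_finset, Finset.card_image_of_injective _ hFinj,
      Finset.card_univ, Fintype.card_coe, hSF, Set.ncard_eq_toFinset_card']
  have hsurj : ∀ a ∈ I, ∃ x, F x = a := by
    intro a ha
    obtain ⟨x, -, rfl⟩ := Finset.mem_image.mp (by exact_mod_cast ha)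
    exact ⟨x, rfl⟩
  set G : α → Fin r := fun a => if h : ∃ x, F x = a then (Classical.choose h).1 else φ₀ a
    with hG
  have hGspec : ∀ a, ∀ ha : a ∈ I, a ∈ A (G a) ∧ F (Classical.choose (hsurj a ha)) = a := by
    intro a ha
    have h : ∃ x, F x = a := hsurj a ha
    have hfc := Classical.choose_spec h
    have hGa : G a = (Classical.choose h).1 := dif_pos h
    have hmem : a ∈ t (Classical.choose h).1 := by simpa only [hfc] using hFmem (Classical.choose h)
    exact ⟨hGa ▸ ((htmem _ _).mp hmem).2, hfc⟩
  have hIind : M.Indep I := by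
    refine indep_of I hIX G ?_ (fun a ha => (hGspec a ha).1)
    intro a ha b hb hab
    have hea : G a = (Classical.choose (hsurj a ha)).1 := dif_pos (hsurj a ha)
    have heb : G b = (Classical.choose (hsurj b hb)).1 := dif_pos (hsurj b hb)
    rw [hea, heb] at hab
    have : Classical.choose (hsurj a ha) = Classical.choose (hsurj b hb) := Subtype.ext hab
    rw [← (hGspec a ha).2, ← (hGspec b hb).2, this]
  -- the easy upper bound
  have hub : ∀ n ∈ {n | ∃ J, M.Indep J ∧ J ⊆ X ∧ J.ncard = n}, n ≤ (supp A X).ncard := by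
    rintro n ⟨J, hJind, hJX, rfl⟩
    obtain ⟨-, φ, hφinj, hφmem⟩ := (hInd J).mp hJind
    have himg : φ '' J ⊆ supp A X := by
      rintro i ⟨y, hyJ, rfl⟩
      exact ⟨y, hJX hyJ, hφmem y hyJ⟩
    calc J.ncard = (φ '' J).ncard := (Set.ncard_image_of_injOn hφinj).symm
      _ ≤ (supp A X).ncard := Set.ncard_le_ncard himg (Set.toFinite _)
  have hmem : (supp A X).ncard ∈ {n | ∃ J, M.Indep J ∧ J ⊆ X ∧ J.ncard = n} :=
    ⟨I, hIind, hIX, hIcard⟩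
  rw [rk]
  exact le_antisymm (le_csSup ⟨_, hub⟩ hmem) (csSup_le ⟨_, hmem⟩ hub)
end

section
/- Let M be a transversal matroid with presentation 𝒜 = (A_i : i ∈ [r]), and for I ⊆ [r] let M[𝒜^I] be the extension of M by a new element x adjoined to the sets A_i with i ∈ I. For any subsets I and J of [r], the matroid M[𝒜^{I ∪ J}] is the smallest (in the weak order on extensions of M by x) matroid that is above both M[𝒜^I] and M[𝒜^J]: that is, M[𝒜^I] ≤w M[𝒜^{I∪J}], M[𝒜^J] ≤w M[𝒜^{I∪J}], and any single-element extension N of M by x with M[𝒜^I] ≤w N and M[𝒜^J] ≤w N satisfies M[𝒜^{I∪J}] ≤w N. -/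
open Classical in
/-- The set system `𝒜^I`: adjoin the new element `x` to the sets `A_i` with
`i ∈ I`. -/
noncomputable def extSys {α : Type*} {r : ℕ} (A : Fin r → Set α) (x : α)
    (I : Set (Fin r)) : Fin r → Set α :=
  fun i => if i ∈ I then insert x (A i) else A i

lemma extSys_mono {α : Type*} {r : ℕ} (A : Fin r → Set α) (x : α)
    {K K' : Set (Fin r)} (h : K ⊆ K') (i : Fin r) :
    extSys A x K i ⊆ extSys A x K' i := by
  unfold extSys
  split_ifs with h1 h2 h2
  · exact subset_rfl
  · exact absurd (h h1) h2
  · exact Set.subset_insert _ _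
  · exact subset_rfl

lemma mem_A_of_mem_extSys {α : Type*} {r : ℕ} {A : Fin r → Set α} {x y : α}
    {K : Set (Fin r)} {i : Fin r} (hy : y ∈ extSys A x K i) (hne : y ≠ x) :
    y ∈ A i := by
  unfold extSys at hy
  split_ifs at hy with h1
  · rcases hy with h | h
    · exact absurd h hne
    · exact h
  · exact hy

/-- `M[𝒜^{I ∪ J}]` is the least upper bound of `M[𝒜^I]` and `M[𝒜^J]` in the
weak order on single-element extensions of `M` by `x`. -/
theorem stmt_18 {α : Type*} {r : ℕ} (E : Set α) (A : Fin r → Set α)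
    (hA : ∀ i, A i ⊆ E) (x : α) (hx : x ∉ E)
    (M : Matroid α) (hME : M.E = E)
    (hM : ∀ S, M.Indep S ↔ S ⊆ E ∧ IsPartialTransversal A S)
    (I J : Set (Fin r))
    (MI MJ MIJ : Matroid α)
    (hMIE : MI.E = insert x E) (hMJE : MJ.E = insert x E)
    (hMIJE : MIJ.E = insert x E)
    (hMI : ∀ S, MI.Indep S ↔ S ⊆ insert x E ∧ IsPartialTransversal (extSys A x I) S)
    (hMJ : ∀ S, MJ.Indep S ↔ S ⊆ insert x E ∧ IsPartialTransversal (extSys A x J) S)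
    (hMIJ : ∀ S, MIJ.Indep S ↔ S ⊆ insert x E ∧
      IsPartialTransversal (extSys A x (I ∪ J)) S) :
    (∀ S, MI.Indep S → MIJ.Indep S) ∧
    (∀ S, MJ.Indep S → MIJ.Indep S) ∧
    (∀ N : Matroid α, N.E = insert x E → N.restrict (N.E \ {x}) = M →
      (∀ S, MI.Indep S → N.Indep S) → (∀ S, MJ.Indep S → N.Indep S) →
      ∀ S, MIJ.Indep S → N.Indep S) := by
  refine ⟨?_, ?_, ?_⟩
  · intro S hS
    rw [hMI] at hS
    rw [hMIJ]
    obtain ⟨hSE, φ, hinj, hmem⟩ := hS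
    exact ⟨hSE, φ, hinj, fun y hy =>
      extSys_mono A x Set.subset_union_left _ (hmem y hy)⟩
  · intro S hS
    rw [hMJ] at hS
    rw [hMIJ]
    obtain ⟨hSE, φ, hinj, hmem⟩ := hS
    exact ⟨hSE, φ, hinj, fun y hy =>
      extSys_mono A x Set.subset_union_right _ (hmem y hy)⟩
  · intro N hNE hNres hNI hNJ S hS
    rw [hMIJ] at hS
    obtain ⟨hSE, φ, hinj, hmem⟩ := hS
    by_cases hxS : x ∈ S
    · -- x ∈ S : φ x must land in I ∪ J
      have hxmem := hmem x hxS
      have hφx : φ x ∈ I ∪ J := by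
        by_contra h
        have : x ∈ A (φ x) := by
          unfold extSys at hxmem
          rw [if_neg h] at hxmem
          exact hxmem
        exact hx (hA _ this)
      have key : ∀ (K : Set (Fin r)), φ x ∈ K →
          IsPartialTransversal (extSys A x K) S := by
        intro K hK
        refine ⟨φ, hinj, fun y hy => ?_⟩
        by_cases hyx : y = x
        · subst hyx
          unfold extSys
          rw [if_pos hK]
          exact Set.mem_insert _ _
        · have hyA : y ∈ A (φ y) := mem_A_of_mem_extSys (hmem y hy) hyx
          unfold extSys
          split_ifs with h1
          · exact Set.mem_insert_of_mem _ hyA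
          · exact hyA
      rcases hφx with h | h
      · exact hNI S ((hMI S).2 ⟨hSE, key I h⟩)
      · exact hNJ S ((hMJ S).2 ⟨hSE, key J h⟩)
    · -- x ∉ S : S is a partial transversal of extSys A x I
      have : IsPartialTransversal (extSys A x I) S := by
        refine ⟨φ, hinj, fun y hy => ?_⟩
        have hyx : y ≠ x := fun h => hxS (h ▸ hy)
        have hyA : y ∈ A (φ y) := mem_A_of_mem_extSys (hmem y hy) hyx
        unfold extSys
        split_ifs with h1
        · exact Set.mem_insert_of_mem _ hyA
        · exact hyA
      exact hNI S ((hMI S).2 ⟨hSE, this⟩)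
end
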